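/- arXiv:1512.04648 — 2 statements merged into one kernel-verified Lean document; each statement's English description precedes it below -/
import Mathlib

section
/- Let (E,F) be a triangulation datum. The map θ ↦ 2θ (doubling every edge colour) is a bijection from Adm(E,F,3) onto the set of colourings in Adm(E,F,4) whose reduction e ↦ θ(e) − ⌊θ(e)⌋ is the zero colouring (equivalently, onto the integer-valued colourings in Adm(E,F,4)). -/
/-- A colouring `θ : E → ℚ` is admissible for the triangulation datum `(E, F)`
and the integer `r` if every edge colour lies in `{0, 1/2, 1, …, (r-2)/2}` and
every triple of `F` satisfies the parity condition, the triangle inequalities,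
and the upper bound constraint. -/
def IsAdmissible {E : Type*} (F : Multiset (E × E × E)) (r : ℕ) (θ : E → ℚ) : Prop :=
  (∀ e : E, ∃ k : ℕ, k ≤ r - 2 ∧ θ e = (k : ℚ) / 2) ∧
  ∀ t ∈ F,
    (∃ z : ℤ, θ t.1 + θ t.2.1 + θ t.2.2 = (z : ℚ)) ∧
    θ t.1 ≤ θ t.2.1 + θ t.2.2 ∧
    θ t.2.1 ≤ θ t.1 + θ t.2.2 ∧
    θ t.2.2 ≤ θ t.1 + θ t.2.1 ∧
    θ t.1 + θ t.2.1 + θ t.2.2 ≤ (r : ℚ) - 2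

/-- The set of admissible colourings of `(E, F)` for the integer `r`. -/
def Adm {E : Type*} (F : Multiset (E × E × E)) (r : ℕ) : Set (E → ℚ) :=
  {θ | IsAdmissible F r θ}

/-! Colours for `r = 3` are `0` and `1/2`, integral colours for `r = 4` are `0` and `1`, and
doubling and halving are mutually inverse between them. The triangle inequalities and the upper
bound are linear, so they survive both maps; the only point is parity after halving: a
`{0,1}`-valued triple satisfying the triangle inequalities with sum at most `2` has sum `0` or `2`. -/

def IsColour (r : ℕ) (x : ℚ) : Prop :=
  ∃ k : ℕ, k ≤ r - 2 ∧ x = k / 2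

def IsAdmissibleTriple (r : ℕ) (a b c : ℚ) : Prop :=
  (∃ z : ℤ, a + b + c = z) ∧ a ≤ b + c ∧ b ≤ a + c ∧ c ≤ a + b ∧ a + b + c ≤ (r : ℚ) - 2

theorem isAdmissible_iff {E : Type*} {F : Multiset (E × E × E)} {r : ℕ} {θ : E → ℚ} :
    IsAdmissible F r θ ↔
      (∀ e, IsColour r (θ e)) ∧ ∀ t ∈ F, IsAdmissibleTriple r (θ t.1) (θ t.2.1) (θ t.2.2) :=
  Iff.rfl

theorem isColour_three_iff {x : ℚ} : IsColour 3 x ↔ x = 0 ∨ x = 1 / 2 := by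
  constructor
  · rintro ⟨k, hk, rfl⟩
    interval_cases k <;> norm_num
  · rintro (rfl | rfl)
    exacts [⟨0, by norm_num⟩, ⟨1, by norm_num⟩]

theorem isColour_four_and_fract_eq_zero_iff {x : ℚ} :
    IsColour 4 x ∧ Int.fract x = 0 ↔ x = 0 ∨ x = 1 := by
  constructor
  · rintro ⟨⟨k, hk, rfl⟩, hfract⟩
    interval_cases k
    · norm_num
    · norm_num at hfract
    · norm_num
  · rintro (rfl | rfl)
    exacts [⟨⟨0, by norm_num⟩, by norm_num⟩, ⟨⟨2, by norm_num⟩, by norm_num⟩]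

theorem IsAdmissibleTriple.two_mul {a b c : ℚ} (h : IsAdmissibleTriple 3 a b c) :
    IsAdmissibleTriple 4 (2 * a) (2 * b) (2 * c) := by
  obtain ⟨⟨z, hz⟩, hab, hbc, hca, hle⟩ := h
  refine ⟨⟨2 * z, by push_cast; linarith⟩, by linarith, by linarith, by linarith, ?_⟩
  push_cast at hle ⊢
  linarith

theorem IsAdmissibleTriple.half {a b c : ℚ} (ha : a = 0 ∨ a = 1) (hb : b = 0 ∨ b = 1)
    (hc : c = 0 ∨ c = 1) (h : IsAdmissibleTriple 4 a b c) :
    IsAdmissibleTriple 3 (a / 2) (b / 2) (c / 2) := by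
  obtain ⟨-, hab, hbc, hca, hle⟩ := h
  -- a sum of `1` violates a triangle inequality, a sum of `3` the upper bound
  have hsum : a + b + c = 0 ∨ a + b + c = 2 := by
    rcases ha with rfl | rfl <;> rcases hb with rfl | rfl <;> rcases hc with rfl | rfl <;>
      norm_num at *
  refine ⟨?_, by linarith, by linarith, by linarith, ?_⟩
  · rcases hsum with h | h
    exacts [⟨0, by push_cast; linarith⟩, ⟨1, by push_cast; linarith⟩]
  · push_cast at hle ⊢
    linarith

/-- Doubling every edge colour is a bijection from `Adm(E,F,3)` onto the set of
colourings in `Adm(E,F,4)` whose reduction `e ↦ η e − ⌊η e⌋` is the zero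
colouring (equivalently, the integer-valued colourings in `Adm(E,F,4)`). -/
theorem double_bijOn {E : Type*} (F : Multiset (E × E × E)) :
    Set.BijOn (fun θ : E → ℚ => fun e => 2 * θ e) (Adm F 3)
      {η ∈ Adm F 4 | (fun e => η e - ⌊η e⌋) = (0 : E → ℚ)} := by
  refine Set.InvOn.bijOn (f' := fun η e => η e / 2)
    ⟨fun θ _ => funext fun e => by ring, fun η _ => funext fun e => by ring⟩ ?_ ?_
  · intro θ hθ
    obtain ⟨hcolour, htriple⟩ := isAdmissible_iff.mp hθ
    have hdouble e : IsColour 4 (2 * θ e) ∧ Int.fract (2 * θ e) = 0 := by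
      apply isColour_four_and_fract_eq_zero_iff.mpr
      rcases isColour_three_iff.mp (hcolour e) with h | h <;> norm_num [h]
    exact ⟨isAdmissible_iff.mpr ⟨fun e => (hdouble e).1, fun t ht => (htriple t ht).two_mul⟩,
      funext fun e => (hdouble e).2⟩
  · rintro η ⟨hη, hfract⟩
    obtain ⟨hcolour, htriple⟩ := isAdmissible_iff.mp hη
    have hval e : η e = 0 ∨ η e = 1 :=
      isColour_four_and_fract_eq_zero_iff.mp ⟨hcolour e, congrFun hfract e⟩
    have hhalf e : IsColour 3 (η e / 2) := by
      apply isColour_three_iff.mpr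
      rcases hval e with h | h <;> norm_num [h]
    exact isAdmissible_iff.mpr ⟨hhalf, fun t ht => (htriple t ht).half (hval _) (hval _) (hval _)⟩
end

section
/- Let (E,F) be a triangulation datum. If the zero colouring is the only element of Adm(E,F,3), then the zero colouring is also the only element of Adm(E,F,4). -/
/-!
Every `θ ∈ Adm(E,F,4)` takes values in `{0, 1/2, 1}`. Its fractional part `e ↦ {θ e}` is again
admissible for `r = 3`: a triple with integral sum has an even number of half-integral entries, so
its fractional parts are `(0,0,0)` or a permutation of `(1/2,1/2,0)`. Hence `{θ} = 0`, i.e. `θ` is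
`{0,1}`-valued. Then the triangle inequalities forbid a triple with exactly one entry `1`, so
`θ / 2` is admissible for `r = 3` as well, and `θ / 2 = 0`.
-/

section OrderedField

variable {R : Type*} [Field R] [LinearOrder R] [IsStrictOrderedRing R]

theorem Int.fract_eq_zero_or_half_of_two_mul_eq [FloorRing R] {a : R} {n : ℤ} (h : 2 * a = n) :
    Int.fract a = 0 ∨ Int.fract a = 1 / 2 := by
  have h₀ := Int.fract_nonneg a
  have h₁ := Int.fract_lt_one a
  have hm : 2 * Int.fract a = ((n - 2 * ⌊a⌋ : ℤ) : R) := by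
    rw [← Int.self_sub_floor]; push_cast; linarith
  have : 0 ≤ n - 2 * ⌊a⌋ := by exact_mod_cast (by linarith : (0 : R) ≤ ((n - 2 * ⌊a⌋ : ℤ) : R))
  have : n - 2 * ⌊a⌋ < 2 := by exact_mod_cast (by linarith : ((n - 2 * ⌊a⌋ : ℤ) : R) < 2)
  obtain hk | hk : n - 2 * ⌊a⌋ = 0 ∨ n - 2 * ⌊a⌋ = 1 := by omega
  all_goals rw [hk] at hm; push_cast at hm
  · left; linarith
  · right; linarith

theorem triangle_conditions_of_mem_Icc_half {a b c : R} (ha : a ∈ Set.Icc (0 : R) (1 / 2))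
    (hb : b ∈ Set.Icc (0 : R) (1 / 2)) (hc : c ∈ Set.Icc (0 : R) (1 / 2)) {z : ℤ}
    (hz : a + b + c = z) :
    a ≤ b + c ∧ b ≤ a + c ∧ c ≤ a + b ∧ a + b + c ≤ 1 := by
  obtain ⟨ha₀, ha₁⟩ := ha
  obtain ⟨hb₀, hb₁⟩ := hb
  obtain ⟨hc₀, hc₁⟩ := hc
  have hz₀ : (0 : R) ≤ z := by linarith
  have hz₂ : (z : R) < 2 := by linarith
  obtain rfl | rfl : z = 0 ∨ z = 1 := by
    have : 0 ≤ z := by exact_mod_cast hz₀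
    have : z < 2 := by exact_mod_cast hz₂
    omega
  all_goals push_cast at hz; refine ⟨?_, ?_, ?_, ?_⟩ <;> linarith

theorem exists_int_eq_half_sum_of_triangle {a b c : R} (ha : a = 0 ∨ a = 1) (hb : b = 0 ∨ b = 1)
    (hc : c = 0 ∨ c = 1) (hab : a ≤ b + c) (hba : b ≤ a + c) (hca : c ≤ a + b)
    (hs : a + b + c ≤ 2) : ∃ z : ℤ, a / 2 + b / 2 + c / 2 = z := by
  rcases ha with rfl | rfl <;> rcases hb with rfl | rfl <;> rcases hc with rfl | rfl <;>
    first
    | (refine ⟨0, ?_⟩; norm_num; done)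
    | (refine ⟨1, ?_⟩; norm_num; done)
    | linarith

end OrderedField

section Admissible

variable {E : Type*} {F : Multiset (E × E × E)}

variable (F) in
theorem zero_mem_adm {r : ℕ} (hr : 2 ≤ r) : (0 : E → ℚ) ∈ Adm F r := by
  have hr' : (2 : ℚ) ≤ r := by exact_mod_cast hr
  refine ⟨fun _ => ⟨0, Nat.zero_le _, by simp⟩, fun _ _ => ⟨⟨0, by simp⟩, ?_⟩⟩
  simp only [Pi.zero_apply, add_zero]
  exact ⟨le_rfl, le_rfl, le_rfl, by linarith⟩

theorem mem_adm_three {θ : E → ℚ} (hθ : ∀ e, θ e = 0 ∨ θ e = 1 / 2)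
    (hF : ∀ t ∈ F, ∃ z : ℤ, θ t.1 + θ t.2.1 + θ t.2.2 = z) : θ ∈ Adm F 3 := by
  have hIcc : ∀ e, θ e ∈ Set.Icc (0 : ℚ) (1 / 2) := fun e => by
    rcases hθ e with h | h <;> rw [h] <;> norm_num
  refine ⟨fun e => ?_, fun t ht => ?_⟩
  · rcases hθ e with h | h
    · exact ⟨0, by norm_num, by simp [h]⟩
    · exact ⟨1, by norm_num, by simp [h]⟩
  · obtain ⟨z, hz⟩ := hF t ht
    obtain ⟨hab, hba, hca, hs⟩ :=
      triangle_conditions_of_mem_Icc_half (hIcc _) (hIcc _) (hIcc _) hz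
    exact ⟨⟨z, hz⟩, hab, hba, hca, hs.trans_eq (by norm_num)⟩

theorem fract_mem_adm_three {r : ℕ} {θ : E → ℚ} (hθ : θ ∈ Adm F r) :
    (fun e => Int.fract (θ e)) ∈ Adm F 3 := by
  obtain ⟨hval, hF⟩ := hθ
  refine mem_adm_three (fun e => ?_) (fun t ht => ?_)
  · obtain ⟨k, -, hk⟩ := hval e
    exact Int.fract_eq_zero_or_half_of_two_mul_eq (n := k) (by rw [hk]; push_cast; ring)
  · obtain ⟨z, hz⟩ := (hF t ht).1
    refine ⟨z - ⌊θ t.1⌋ - ⌊θ t.2.1⌋ - ⌊θ t.2.2⌋, ?_⟩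
    simp only [← Int.self_sub_floor]
    push_cast
    linarith

theorem half_mem_adm_three {θ : E → ℚ} (hθ : θ ∈ Adm F 4) (hint : ∀ e, Int.fract (θ e) = 0) :
    (fun e => θ e / 2) ∈ Adm F 3 := by
  obtain ⟨hval, hF⟩ := hθ
  have h01 : ∀ e, θ e = 0 ∨ θ e = 1 := fun e => by
    obtain ⟨k, hk, he⟩ := hval e
    have hfract := hint e
    rw [he] at hfract ⊢
    interval_cases k <;> norm_num at hfract <;> norm_num
  refine mem_adm_three (fun e => ?_) (fun t ht => ?_)
  · rcases h01 e with h | h <;> simp [h]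
  · obtain ⟨-, hab, hba, hca, hs⟩ := hF t ht
    exact exists_int_eq_half_sum_of_triangle (h01 _) (h01 _) (h01 _) hab hba hca
      (by norm_num at hs; linarith)

end Admissible

/-- If the zero colouring is the only element of `Adm(E,F,3)`, then it is also
the only element of `Adm(E,F,4)`. -/
theorem adm_four_eq_singleton_zero {E : Type*} (F : Multiset (E × E × E))
    (h : Adm F 3 = {(0 : E → ℚ)}) :
    Adm F 4 = {(0 : E → ℚ)} := by
  refine Set.eq_singleton_iff_unique_mem.2 ⟨zero_mem_adm F (by norm_num), fun θ hθ => ?_⟩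
  have hfract : (fun e => Int.fract (θ e)) = 0 := by
    simpa [h] using fract_mem_adm_three hθ
  have hhalf : (fun e => θ e / 2) = 0 := by
    simpa [h] using half_mem_adm_three hθ (congrFun hfract)
  funext e
  simpa using congrFun hhalf e
end
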